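/- arXiv:1909.10762 — 2 statements merged into one kernel-verified Lean document; each statement's English description precedes it below -/
import Mathlib

section
/- Define by backward induction $J_N(x, R) = xR$ and $J_k(x,R) = \min_{0 \le u \le R} [xu + J_{k+1}(x(1+h(u)), R-u)]$ (taking expectation over mean-zero noise inside a price linear in $x$). If $h$ is non-decreasing with $h(0)=0$, then $J_k(x, R) = xR$ for all $0 \le k \le N$ and all $x > 0$, $R \geq 0$. -/
theorem fiscal_cost_to_go_eq_xR
    (N : ℕ) (h : ℝ → ℝ) (hmono : Monotone h) (h0 : h 0 = 0)
    (J : ℕ → ℝ → ℝ → ℝ)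
    (hJN : ∀ x R : ℝ, J N x R = x * R)
    (hJk : ∀ k < N, ∀ x R : ℝ,
      J k x R = sInf {v : ℝ | ∃ u ∈ Set.Icc (0 : ℝ) R,
        v = x * u + J (k + 1) (x * (1 + h u)) (R - u)}) :
    ∀ k ≤ N, ∀ x R : ℝ, 0 < x → 0 ≤ R → J k x R = x * R := by
  suffices H : ∀ d k, k + d = N → ∀ x R : ℝ, 0 < x → 0 ≤ R → J k x R = x * R by
    intro k hk x R hx hR
    exact H (N - k) k (by omega) x R hx hR
  intro d
  induction d with
  | zero => intro k hk x R hx hR; subst hk; simpa using hJN x R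
  | succ d ih =>
    intro k hk x R hx hR
    have hkN : k < N := by omega
    have hIH : ∀ x R : ℝ, 0 < x → 0 ≤ R → J (k + 1) x R = x * R :=
      ih (k + 1) (by omega)
    rw [hJk k hkN x R]
    have hset : ∀ v ∈ {v : ℝ | ∃ u ∈ Set.Icc (0 : ℝ) R,
        v = x * u + J (k + 1) (x * (1 + h u)) (R - u)}, x * R ≤ v := by
      rintro v ⟨u, ⟨hu0, huR⟩, rfl⟩
      have hhu : 0 ≤ h u := h0 ▸ hmono hu0
      have hxpos : 0 < x * (1 + h u) := by positivity
      rw [hIH _ _ hxpos (by linarith)]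
      nlinarith [mul_nonneg (mul_nonneg hx.le hhu) (sub_nonneg.2 huR)]
    have hmem : x * R ∈ {v : ℝ | ∃ u ∈ Set.Icc (0 : ℝ) R,
        v = x * u + J (k + 1) (x * (1 + h u)) (R - u)} := by
      refine ⟨0, ⟨le_refl _, hR⟩, ?_⟩
      rw [h0]
      have hxpos : 0 < x * (1 + 0 : ℝ) := by simpa using hx
      rw [hIH _ _ hxpos (by linarith)]
      ring
    exact le_antisymm (csInf_le ⟨x * R, hset⟩ hmem) (le_csInf ⟨_, hmem⟩ hset)
end

section
/- Consider the fiscal-cost Bellman recursion $J_N(x,R) = xR$ and $J_k(x,R) = \min_{0 \le u \le R}[xu + (1+\beta u) J_{k+1}(x, R-u)]$ for $\beta \geq 0$ (obtained from price update $x' = x(1+\beta u + \epsilon)$, $\mathbb{E}[\epsilon]=0$, and linearity of $J_{k+1}$ in price). Then for every $k$, every $x > 0$ and $R \geq 0$, the minimum is attained and equals $xR$, and $u = 0$ attains it. -/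
/-!
If the continuation cost is linear in the remaining reserve, `V r = x r`, the stage objective is
`x u + (1 + β u) x (R - u) = x R + β x u (R - u)`. The extra term is nonnegative on `[0, R]` and
vanishes at `u = 0`, so the minimum is `x R` again, attained at `u = 0`: linearity propagates
backwards from the terminal stage.
-/

open Set

theorem sInf_setOf_exists_eq_of_isMinOn {α β : Type*} [ConditionallyCompleteLattice β]
    {f : α → β} {s : Set α} {a : α} (ha : a ∈ s) (hmin : IsMinOn f s a) :
    sInf {v | ∃ u ∈ s, v = f u} = f a := by
  refine IsLeast.csInf_eq ⟨⟨a, ha, rfl⟩, ?_⟩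
  rintro _ ⟨u, hu, rfl⟩
  exact hmin hu

section LinearContinuation

variable {β x R : ℝ} {V : ℝ → ℝ}

theorem stage_cost_linear_continuation (hV : ∀ r, 0 ≤ r → V r = x * r) {u : ℝ} (hu : u ≤ R) :
    x * u + (1 + β * u) * V (R - u) = x * R + β * x * (u * (R - u)) := by
  rw [hV (R - u) (sub_nonneg.mpr hu)]
  ring

theorem isMinOn_zero_of_linear_continuation (hβ : 0 ≤ β) (hx : 0 ≤ x)
    (hV : ∀ r, 0 ≤ r → V r = x * r) :
    IsMinOn (fun u => x * u + (1 + β * u) * V (R - u)) (Icc 0 R) 0 := by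
  refine isMinOn_iff.mpr fun u ⟨hu₀, huR⟩ => ?_
  have hR : (0 : ℝ) ≤ R := hu₀.trans huR
  have hextra : 0 ≤ β * x * (u * (R - u)) :=
    mul_nonneg (mul_nonneg hβ hx) (mul_nonneg hu₀ (sub_nonneg.mpr huR))
  rw [stage_cost_linear_continuation hV huR, stage_cost_linear_continuation hV hR]
  linarith

theorem bellman_step_of_linear_continuation (hβ : 0 ≤ β) (hx : 0 ≤ x) (hR : 0 ≤ R)
    (hV : ∀ r, 0 ≤ r → V r = x * r) :
    sInf {v : ℝ | ∃ u ∈ Icc (0 : ℝ) R, v = x * u + (1 + β * u) * V (R - u)} = x * R := by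
  rw [sInf_setOf_exists_eq_of_isMinOn (left_mem_Icc.mpr hR)
      (isMinOn_zero_of_linear_continuation hβ hx hV), stage_cost_linear_continuation hV hR]
  ring

end LinearContinuation

theorem linear_impact_fiscal_bellman
    (N : ℕ) (β : ℝ) (hβ : 0 ≤ β)
    (J : ℕ → ℝ → ℝ → ℝ)
    (hJN : ∀ x R : ℝ, J N x R = x * R)
    (hJk : ∀ k < N, ∀ x R : ℝ,
      J k x R = sInf {v : ℝ | ∃ u ∈ Set.Icc (0 : ℝ) R,
        v = x * u + (1 + β * u) * J (k + 1) x (R - u)}) :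
    ∀ k ≤ N, ∀ x R : ℝ, 0 < x → 0 ≤ R →
      J k x R = x * R ∧
      (k < N →
        IsMinOn (fun u : ℝ => x * u + (1 + β * u) * J (k + 1) x (R - u))
          (Set.Icc 0 R) 0 ∧
        x * 0 + (1 + β * 0) * J (k + 1) x (R - 0) = x * R) := by
  intro k hk x R hx hR
  have hlinear : ∀ j ≤ N, ∀ r, 0 ≤ r → J j x r = x * r := by
    intro j hj
    induction hj using Nat.decreasingInduction with
    | self => exact fun r _ => hJN x r
    | of_succ j hjN ih =>
      intro r hr
      rw [hJk j hjN x r]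
      exact bellman_step_of_linear_continuation hβ hx.le hr ih
  refine ⟨hlinear k hk R hR, fun hkN => ⟨?_, ?_⟩⟩
  · exact isMinOn_zero_of_linear_continuation hβ hx.le (hlinear (k + 1) hkN)
  · rw [stage_cost_linear_continuation (hlinear (k + 1) hkN) hR]
    ring
end
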